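/- Let Π denote the parity operator on L²(ℝ), (Πψ)(x) = ψ(−x), and let A := sgn Q(0) + sgn Q(2π/3) + sgn Q(4π/3). Then Π A Π = −A; consequently −A is unitarily equivalent to A, so the spectral bounds of A are ±‖A‖. -/

import Mathlib

open MeasureTheory Complex Real
open scoped InnerProductSpace ComplexConjugate

noncomputable section

/-- The complex Hilbert space `L²(ℝ, ℂ)`. -/
abbrev L2 : Type := Lp ℂ 2 (volume : Measure ℝ)

/-- `F` is the Fourier–Plancherel unitary operator on `L²(ℝ)`,
with convention `(Fψ)(p) = (2π)^{-1/2} ∫ e^{-ipq} ψ(q) dq`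
(this property on the dense subspace `L¹ ∩ L²` determines `F` uniquely). -/
def IsFourier (F : L2 ≃ₗᵢ[ℂ] L2) : Prop :=
  ∀ ψ : L2, Integrable (⇑ψ) volume →
    (F ψ : ℝ → ℂ) =ᵐ[volume]
      fun p : ℝ => (((2 * π) ^ (-(1:ℝ)/2) : ℝ) : ℂ) *
        ∫ q : ℝ, Complex.exp (-(Complex.I) * (p : ℂ) * (q : ℂ)) * ψ q

/-- `T` is the bounded multiplication operator `M_g` by `g` on `L²(ℝ)`. -/
def IsMulOp (g : ℝ → ℂ) (T : L2 →L[ℂ] L2) : Prop :=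
  ∀ ψ : L2, (T ψ : ℝ → ℂ) =ᵐ[volume] fun q => g q * ψ q

/-- `T = sgn P := 𝓕⁻¹ ∘ M_sgn ∘ 𝓕`. -/
def IsSgnP (T : L2 →L[ℂ] L2) : Prop :=
  ∃ F : L2 ≃ₗᵢ[ℂ] L2, IsFourier F ∧
    ∀ ψ : L2, (F (T ψ) : ℝ → ℂ) =ᵐ[volume]
      fun p => ((Real.sign p : ℝ) : ℂ) * (F ψ : ℝ → ℂ) p

/-- `χ_t(q) = exp(−(i/2)(cot t) q²)`. -/
def chi (t q : ℝ) : ℂ :=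
  Complex.exp (-(Complex.I / 2) * ((Real.cos t / Real.sin t : ℝ) : ℂ) * (q : ℂ) ^ 2)

/-- `T = sgn Q(t)`: for `t = 0` this is `M_sgn`, and for `sin t ≠ 0` it is
`sgn(sin t) · M_{χ_t} ∘ (sgn P) ∘ M_{χ_t}⁻¹`, which realizes `sgn(Q cos t + P sin t)`. -/
def IsSgnQ (t : ℝ) (T : L2 →L[ℂ] L2) : Prop :=
  if t = 0 then IsMulOp (fun q => ((Real.sign q : ℝ) : ℂ)) T
  else ∃ P Mc Mci : L2 →L[ℂ] L2, IsSgnP P ∧ IsMulOp (chi t) Mc ∧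
    IsMulOp (fun q => (chi t q)⁻¹) Mci ∧
    T = (((Real.sign (Real.sin t) : ℝ) : ℂ) • (Mc ∘L P ∘L Mci))

namespace ParityAux

lemma ae_neg {f g : ℝ → ℂ} (h : f =ᵐ[volume] g) :
    (fun x : ℝ => f (-x)) =ᵐ[volume] fun x : ℝ => g (-x) :=
  (Measure.measurePreserving_neg (volume : Measure ℝ)).quasiMeasurePreserving.ae_eq h

lemma dense_integrable : Dense {ψ : L2 | Integrable (⇑ψ) volume} := by
  intro ψ
  rw [Metric.mem_closure_iff]
  intro ε hε
  obtain ⟨g, hgc, hg2, hgcont, hgm⟩ :=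
    (Lp.memLp ψ).exists_hasCompactSupport_eLpNorm_sub_le ENNReal.ofNat_ne_top
      (ε := ENNReal.ofReal (ε / 2)) (by simp only [ne_eq, ENNReal.ofReal_eq_zero, not_le]; linarith)
  refine ⟨hgm.toLp g, ?_, ?_⟩
  · exact (hgcont.integrable_of_hasCompactSupport hgc).congr (hgm.coeFn_toLp).symm
  · have h1 : eLpNorm (⇑ψ - ⇑(hgm.toLp g)) 2 volume = eLpNorm (⇑ψ - g) 2 volume := by
      apply eLpNorm_congr_ae
      filter_upwards [hgm.coeFn_toLp] with x hx
      simp [hx]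
    have h2 : dist ψ (hgm.toLp g) ≤ ε / 2 := by
      rw [Lp.dist_def, h1]
      exact ENNReal.toReal_le_of_le_ofReal (by linarith) hg2
    linarith

lemma eq_on_integrable {S T : L2 →L[ℂ] L2}
    (h : ∀ ψ : L2, Integrable (⇑ψ) volume → S ψ = T ψ) : S = T :=
  ContinuousLinearMap.ext fun ψ =>
    congrFun (Continuous.ext_on dense_integrable S.continuous T.continuous
      (fun φ hφ => h φ hφ)) ψ

section Par

variable {Par : L2 →L[ℂ] L2}
  (hPar : ∀ ψ : L2, (Par ψ : ℝ → ℂ) =ᵐ[volume] fun x => ψ (-x))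
include hPar

lemma par_par : ∀ ψ : L2, Par (Par ψ) = ψ := fun ψ => Lp.ext <| by
  filter_upwards [hPar (Par ψ), ae_neg (hPar ψ)] with x h1 h2
  rw [h1, h2, neg_neg]

lemma par_integrable {ψ : L2} (hψ : Integrable (⇑ψ) volume) :
    Integrable (⇑(Par ψ)) volume := by
  have h2 : Integrable (fun x : ℝ => ψ (-x)) volume :=
    ((Measure.measurePreserving_neg (volume : Measure ℝ)).integrable_comp
      (Lp.aestronglyMeasurable ψ)).mpr hψ
  exact h2.congr (hPar ψ).symm

lemma fourier_par {F : L2 ≃ₗᵢ[ℂ] L2} (hF : IsFourier F) :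
    ∀ ψ : L2, F (Par ψ) = Par (F ψ) := by
  have key : (F.toLinearIsometry.toContinuousLinearMap ∘L Par)
      = (Par ∘L F.toLinearIsometry.toContinuousLinearMap) := by
    apply eq_on_integrable
    intro ψ hψ
    simp only [ContinuousLinearMap.comp_apply, LinearIsometry.coe_toContinuousLinearMap,
      LinearIsometryEquiv.coe_toLinearIsometry]
    apply Lp.ext
    have lhs1 := hF (Par ψ) (par_integrable hPar hψ)
    have lhs2 : (fun p : ℝ => (((2 * π) ^ (-(1:ℝ)/2) : ℝ) : ℂ) *
          ∫ q : ℝ, Complex.exp (-(Complex.I) * (p : ℂ) * (q : ℂ)) * (Par ψ) q)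
        = fun p : ℝ => (((2 * π) ^ (-(1:ℝ)/2) : ℝ) : ℂ) *
          ∫ q : ℝ, Complex.exp (Complex.I * (p : ℂ) * (q : ℂ)) * ψ q := by
      funext p
      congr 1
      have e1 : ∫ q : ℝ, Complex.exp (-(Complex.I) * (p : ℂ) * (q : ℂ)) * (Par ψ) q
          = ∫ q : ℝ, Complex.exp (-(Complex.I) * (p : ℂ) * (q : ℂ)) * ψ (-q) := by
        apply integral_congr_ae
        filter_upwards [hPar ψ] with q hq
        rw [hq]
      rw [e1]
      have e2 := integral_neg_eq_self
        (fun q : ℝ => Complex.exp (-(Complex.I) * (p : ℂ) * ((-q : ℝ) : ℂ)) * ψ q) volume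
      simp only [neg_neg] at e2
      rw [e2]
      apply integral_congr_ae
      filter_upwards with q
      have harg : (-(Complex.I) * (p : ℂ) * ((-q : ℝ) : ℂ)) = Complex.I * (p : ℂ) * (q : ℂ) := by
        push_cast
        ring
      rw [harg]
    have rhs1 : (Par (F ψ) : ℝ → ℂ) =ᵐ[volume] fun p : ℝ => (F ψ : ℝ → ℂ) (-p) := hPar (F ψ)
    have rhs2 : (fun p : ℝ => (F ψ : ℝ → ℂ) (-p)) =ᵐ[volume]
        fun p : ℝ => (((2 * π) ^ (-(1:ℝ)/2) : ℝ) : ℂ) *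
          ∫ q : ℝ, Complex.exp (-(Complex.I) * ((-p : ℝ) : ℂ) * (q : ℂ)) * ψ q :=
      ae_neg (hF ψ hψ)
    have rhs3 : (fun p : ℝ => (((2 * π) ^ (-(1:ℝ)/2) : ℝ) : ℂ) *
          ∫ q : ℝ, Complex.exp (-(Complex.I) * ((-p : ℝ) : ℂ) * (q : ℂ)) * ψ q)
        = fun p : ℝ => (((2 * π) ^ (-(1:ℝ)/2) : ℝ) : ℂ) *
          ∫ q : ℝ, Complex.exp (Complex.I * (p : ℂ) * (q : ℂ)) * ψ q := by
      funext p
      congr 1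
      apply integral_congr_ae
      filter_upwards with q
      have harg : (-(Complex.I) * ((-p : ℝ) : ℂ) * (q : ℂ)) = Complex.I * (p : ℂ) * (q : ℂ) := by
        push_cast
        ring
      rw [harg]
    refine lhs1.trans ?_
    rw [lhs2, ← rhs3]
    exact (rhs1.trans rhs2).symm
  intro ψ
  have := congrFun (congrArg DFunLike.coe key) ψ
  simpa using this

lemma par_sgnP {P : L2 →L[ℂ] L2} (hP : IsSgnP P) :
    ∀ ψ : L2, Par (P (Par ψ)) = -(P ψ) := by
  obtain ⟨F, hF, hPF⟩ := hP
  intro ψ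
  have hfp := fourier_par hPar hF
  apply F.injective
  rw [hfp (P (Par ψ)), map_neg]
  apply Lp.ext
  have h1 : (Par (F (P (Par ψ))) : ℝ → ℂ) =ᵐ[volume]
      fun p : ℝ => (F (P (Par ψ)) : ℝ → ℂ) (-p) := hPar _
  have h2 : (fun p : ℝ => (F (P (Par ψ)) : ℝ → ℂ) (-p)) =ᵐ[volume]
      fun p : ℝ => ((Real.sign (-p) : ℝ) : ℂ) * (F (Par ψ) : ℝ → ℂ) (-p) :=
    ae_neg (hPF (Par ψ))
  have h3 : (fun p : ℝ => (F (Par ψ) : ℝ → ℂ) (-p)) =ᵐ[volume]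
      fun p : ℝ => (F ψ : ℝ → ℂ) p := by
    rw [hfp ψ]
    filter_upwards [ae_neg (hPar (F ψ))] with p hp
    rw [hp, neg_neg]
  have h4 : ((-(F (P ψ)) : L2) : ℝ → ℂ) =ᵐ[volume]
      fun p : ℝ => -(((Real.sign p : ℝ) : ℂ) * (F ψ : ℝ → ℂ) p) :=
    (Lp.coeFn_neg _).trans (hPF ψ).neg
  filter_upwards [h1, h2, h3, h4] with p e1 e2 e3 e4
  rw [e1, e2, e3, e4, Real.sign_neg]
  push_cast
  ring

lemma par_mul_comm {g : ℝ → ℂ} (hg : ∀ x, g (-x) = g x) {M : L2 →L[ℂ] L2}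
    (hM : IsMulOp g M) : ∀ ψ : L2, Par (M ψ) = M (Par ψ) := fun ψ => Lp.ext <| by
  filter_upwards [hPar (M ψ), ae_neg (hM ψ), hM (Par ψ), hPar ψ] with x e1 e2 e3 e4
  rw [e1, e2, e3, e4, hg]

lemma par_conj_sgnQ0 {T : L2 →L[ℂ] L2}
    (hT : IsMulOp (fun q => ((Real.sign q : ℝ) : ℂ)) T) :
    ∀ ψ : L2, Par (T (Par ψ)) = -(T ψ) := fun ψ => Lp.ext <| by
  filter_upwards [hPar (T (Par ψ)), ae_neg (hT (Par ψ)), ae_neg (hPar ψ),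
    Lp.coeFn_neg (T ψ), hT ψ] with x e1 e2 e3 e4 e5
  rw [e1, e2, e3, e4]
  simp only [Pi.neg_apply]
  rw [e5, neg_neg, Real.sign_neg]
  push_cast
  ring

end Par

lemma chi_neg (t q : ℝ) : chi t (-q) = chi t q := by
  unfold chi
  congr 2
  push_cast
  ring

lemma conj_chi (t q : ℝ) : (starRingEnd ℂ) (chi t q) = (chi t q)⁻¹ := by
  rw [chi, ← Complex.exp_conj, ← Complex.exp_neg]
  congr 1
  simp only [map_mul, map_neg, map_div₀, Complex.conj_I, Complex.conj_ofReal, map_pow,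
    map_ofNat]
  ring

lemma conj_chi_inv (t q : ℝ) : (starRingEnd ℂ) ((chi t q)⁻¹) = chi t q := by
  rw [map_inv₀, conj_chi, inv_inv]

lemma par_conj_sgnQt {Par : L2 →L[ℂ] L2}
    (hPar : ∀ ψ : L2, (Par ψ : ℝ → ℂ) =ᵐ[volume] fun x => ψ (-x))
    {t : ℝ} (ht : t ≠ 0) {T : L2 →L[ℂ] L2} (hT : IsSgnQ t T) :
    ∀ ψ : L2, Par (T (Par ψ)) = -(T ψ) := by
  rw [IsSgnQ, if_neg ht] at hT
  obtain ⟨P, Mc, Mci, hP, hMc, hMci, rfl⟩ := hT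
  intro ψ
  have hc := par_mul_comm hPar (fun x => chi_neg t x) hMc
  have hci := par_mul_comm hPar (fun x => by rw [chi_neg]) hMci
  have hp2 := par_sgnP hPar hP
  simp only [ContinuousLinearMap.smul_apply, ContinuousLinearMap.comp_apply, _root_.map_smul]
  rw [← hci ψ, hc (P (Par (Mci ψ))), hp2 (Mci ψ), _root_.map_neg, smul_neg]

lemma inner_eq (f g : L2) : ⟪f, g⟫_ℂ = ∫ x : ℝ, (starRingEnd ℂ) (f x) * g x := by
  rw [MeasureTheory.L2.inner_def]
  apply integral_congr_ae
  filter_upwards with x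
  simp [RCLike.inner_apply]
  ring

lemma inner_mul_shift {g gc : ℝ → ℂ} (hgc : ∀ x, (starRingEnd ℂ) (g x) = gc x)
    {M Mc : L2 →L[ℂ] L2} (hM : IsMulOp g M) (hMc : IsMulOp gc Mc) (f h : L2) :
    ⟪M f, h⟫_ℂ = ⟪f, Mc h⟫_ℂ := by
  rw [inner_eq, inner_eq]
  apply integral_congr_ae
  filter_upwards [hM f, hMc h] with x e1 e2
  rw [e1, e2, map_mul, hgc]
  ring

lemma isSymm_sgnP {P : L2 →L[ℂ] L2} (hP : IsSgnP P) :
    (P : L2 →ₗ[ℂ] L2).IsSymmetric := by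
  obtain ⟨F, -, hPF⟩ := hP
  intro f h
  simp only [ContinuousLinearMap.coe_coe]
  rw [← F.inner_map_map (P f) h, ← F.inner_map_map f (P h), inner_eq, inner_eq]
  apply integral_congr_ae
  filter_upwards [hPF f, hPF h] with x e1 e2
  rw [e1, e2, map_mul, Complex.conj_ofReal]
  ring

lemma isSymm_of_sgnQ0 {T : L2 →L[ℂ] L2}
    (hT : IsMulOp (fun q => ((Real.sign q : ℝ) : ℂ)) T) :
    (T : L2 →ₗ[ℂ] L2).IsSymmetric := by
  intro f h
  simp only [ContinuousLinearMap.coe_coe]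
  exact inner_mul_shift (fun x => Complex.conj_ofReal _) hT hT f h

lemma isSymm_of_sgnQt {t : ℝ} (ht : t ≠ 0) {T : L2 →L[ℂ] L2} (hT : IsSgnQ t T) :
    (T : L2 →ₗ[ℂ] L2).IsSymmetric := by
  rw [IsSgnQ, if_neg ht] at hT
  obtain ⟨P, Mc, Mci, hP, hMc, hMci, rfl⟩ := hT
  intro f h
  simp only [ContinuousLinearMap.coe_coe, ContinuousLinearMap.smul_apply,
    ContinuousLinearMap.comp_apply]
  rw [inner_smul_left, inner_smul_right, Complex.conj_ofReal]
  congr 1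
  have hsP : ∀ u v : L2, ⟪P u, v⟫_ℂ = ⟪u, P v⟫_ℂ := fun u v => by
    simpa using isSymm_sgnP hP u v
  rw [inner_mul_shift (conj_chi t) hMc hMci (P (Mci f)) h, hsP (Mci f) (Mci h),
    inner_mul_shift (conj_chi_inv t) hMci hMc f (P (Mci h))]

instance : Nontrivial L2 := by
  refine ⟨indicatorConstLp 2 (measurableSet_Ioo : MeasurableSet (Set.Ioo (0:ℝ) 1))
    (by simp) (1 : ℂ), 0, fun h => ?_⟩
  have hn : ‖(indicatorConstLp 2 (measurableSet_Ioo : MeasurableSet (Set.Ioo (0:ℝ) 1))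
      (by simp) (1 : ℂ) : L2)‖ = 1 := by
    rw [norm_indicatorConstLp (by norm_num) (by norm_num)]
    simp [Real.volume_Ioo]
  rw [h] at hn
  simp at hn

end ParityAux

open ParityAux in
/-- If `Π` is the parity operator `(Πψ)(x) = ψ(−x)` and
`A := sgn Q(0) + sgn Q(2π/3) + sgn Q(4π/3)`, then `Π A Π = −A`; consequently `−A` is
unitarily equivalent to `A` (the spectrum of `A` is symmetric), so the spectral bounds
of `A` are `±‖A‖`. -/
theorem parity_conj_neg (Par A0 A2 A4 : L2 →L[ℂ] L2)
    (hPar : ∀ ψ : L2, (Par ψ : ℝ → ℂ) =ᵐ[volume] fun x => ψ (-x))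
    (h0 : IsSgnQ 0 A0) (h2 : IsSgnQ (2 * π / 3) A2) (h4 : IsSgnQ (4 * π / 3) A4) :
    Par ∘L (A0 + A2 + A4) ∘L Par = -(A0 + A2 + A4) ∧
    spectrum ℂ (-(A0 + A2 + A4)) = spectrum ℂ (A0 + A2 + A4) ∧
    sSup {x : ℝ | (x : ℂ) ∈ spectrum ℂ (A0 + A2 + A4)} = ‖A0 + A2 + A4‖ ∧
    sInf {x : ℝ | (x : ℂ) ∈ spectrum ℂ (A0 + A2 + A4)} = -‖A0 + A2 + A4‖ := by
  have h0' : IsMulOp (fun q => ((Real.sign q : ℝ) : ℂ)) A0 := by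
    rwa [IsSgnQ, if_pos rfl] at h0
  have ht2 : (2 * π / 3 : ℝ) ≠ 0 := by positivity
  have ht4 : (4 * π / 3 : ℝ) ≠ 0 := by positivity
  set A : L2 →L[ℂ] L2 := A0 + A2 + A4 with hA
  -- elementwise anticommutation
  have k0 := par_conj_sgnQ0 hPar h0'
  have k2 := par_conj_sgnQt hPar ht2 h2
  have k4 := par_conj_sgnQt hPar ht4 h4
  have E : Par ∘L A ∘L Par = -A := by
    refine ContinuousLinearMap.ext fun ψ => ?_
    simp only [ContinuousLinearMap.comp_apply, ContinuousLinearMap.add_apply,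
      ContinuousLinearMap.neg_apply, hA, map_add]
    rw [k0 ψ, k2 ψ, k4 ψ]
    abel
  refine ⟨E, ?_⟩
  -- parity is a unit
  have hpp : Par * Par = 1 := ContinuousLinearMap.ext fun ψ => by
    rw [ContinuousLinearMap.mul_apply, ContinuousLinearMap.one_apply]
    exact par_par hPar ψ
  set u : (L2 →L[ℂ] L2)ˣ := ⟨Par, Par, hpp, hpp⟩ with hu
  have hconj : -A = ↑u * A * ↑u⁻¹ := by
    rw [← E]
    rfl
  have hspec : spectrum ℂ (-A) = spectrum ℂ A := by
    rw [hconj, spectrum.units_conjugate]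
  refine ⟨hspec, ?_⟩
  -- self-adjointness
  have hsa : IsSelfAdjoint A := by
    rw [ContinuousLinearMap.isSelfAdjoint_iff_isSymmetric]
    have hcoe : ((A : L2 →L[ℂ] L2) : L2 →ₗ[ℂ] L2)
        = (A0 : L2 →ₗ[ℂ] L2) + (A2 : L2 →ₗ[ℂ] L2) + (A4 : L2 →ₗ[ℂ] L2) := by
      rw [hA]; rfl
    rw [hcoe]
    exact ((isSymm_of_sgnQ0 h0').add (isSymm_of_sgnQt ht2 h2)).add (isSymm_of_sgnQt ht4 h4)
  -- spectral radius attained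
  obtain ⟨z, hz, hzr⟩ := spectrum.exists_nnnorm_eq_spectralRadius A
  have hzn : ‖z‖ = ‖A‖ := by
    have h1 := hzr.trans hsa.spectralRadius_eq_nnnorm
    have h2 : ‖z‖₊ = ‖A‖₊ := by exact_mod_cast h1
    rw [← coe_nnnorm z, ← coe_nnnorm A, h2]
  have hzre : z = (z.re : ℂ) := hsa.mem_spectrum_eq_re hz
  set x : ℝ := z.re with hx
  have hxmem : (x : ℂ) ∈ spectrum ℂ A := by rw [← hzre]; exact hz
  have hxabs : |x| = ‖A‖ := by
    rw [← hzn, hzre]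
    simp [Real.norm_eq_abs]
  have hnegmem : ∀ y : ℝ, (y : ℂ) ∈ spectrum ℂ A → ((-y : ℝ) : ℂ) ∈ spectrum ℂ A := by
    intro y hy
    have h1 : -(y : ℂ) ∈ -spectrum ℂ A := Set.neg_mem_neg.mpr hy
    rw [spectrum.neg_eq, hspec] at h1
    push_cast
    exact h1
  have hmemP : ((‖A‖ : ℝ) : ℂ) ∈ spectrum ℂ A ∧ ((-‖A‖ : ℝ) : ℂ) ∈ spectrum ℂ A := by
    rcases abs_cases x with ⟨h1, -⟩ | ⟨h1, -⟩
    · have hxA : x = ‖A‖ := by rw [← hxabs, h1]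
      refine ⟨by rw [← hxA]; exact hxmem, ?_⟩
      have h3 := hnegmem x hxmem
      rwa [hxA] at h3
    · have hxA : x = -‖A‖ := by rw [← hxabs, h1, neg_neg]
      refine ⟨?_, by rw [← hxA]; exact hxmem⟩
      have h3 := hnegmem x hxmem
      rwa [hxA, neg_neg] at h3
  have hb : ∀ y : ℝ, (y : ℂ) ∈ spectrum ℂ A → |y| ≤ ‖A‖ := by
    intro y hy
    have h1 := spectrum.norm_le_norm_of_mem hy
    simpa [Real.norm_eq_abs] using h1
  have hne : (‖A‖ : ℝ) ∈ {x : ℝ | (x : ℂ) ∈ spectrum ℂ A} := hmemP.1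
  have hne' : (-‖A‖ : ℝ) ∈ {x : ℝ | (x : ℂ) ∈ spectrum ℂ A} := hmemP.2
  have hub : ∀ y ∈ {x : ℝ | (x : ℂ) ∈ spectrum ℂ A}, y ≤ ‖A‖ :=
    fun y hy => (le_abs_self y).trans (hb y hy)
  have hlb : ∀ y ∈ {x : ℝ | (x : ℂ) ∈ spectrum ℂ A}, -‖A‖ ≤ y := by
    intro y hy
    have := hb y hy
    have := neg_abs_le y
    linarith
  constructor
  · exact le_antisymm (csSup_le ⟨‖A‖, hne⟩ hub) (le_csSup ⟨‖A‖, hub⟩ hne)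
  · exact le_antisymm (csInf_le ⟨-‖A‖, hlb⟩ hne') (le_csInf ⟨-‖A‖, hne'⟩ hlb)
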